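/- arXiv:2411.12551 — 2 statements merged into one kernel-verified Lean document; each statement's English description precedes it below -/
import Mathlib

section
/- (Darboux basis theorem) Let V be a 2n-dimensional real vector space with a nondegenerate alternating bilinear form ω. Then there exists a basis e₁, …, eₙ, f₁, …, fₙ of V such that ω(eᵢ,eⱼ) = 0, ω(fᵢ,fⱼ) = 0, and ω(eᵢ,fⱼ) = δᵢⱼ for all 1 ≤ i,j ≤ n; equivalently, (V,ω) is linearly symplectomorphic to ℝ²ⁿ with the standard symplectic form ω₀((q,p),(q',p')) = Σᵢ (qᵢ p'ᵢ − pᵢ q'ᵢ). -/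
/-!
Choose `e, f` with `ω e f = 1` and let `P = span {e, f}`. The form is nondegenerate on `P`, so
`V = P ⊕ Pᗮ`; since `Pᗮᗮ = P`, the same criterion shows that `ω` is nondegenerate on `Pᗮ`, and
induction on the dimension produces a Darboux family `e₁, …, eₙ, f₁, …, fₙ`. The map
`(x, y) ↦ ∑ xᵢ • eᵢ + ∑ yᵢ • fᵢ` pulls `ω` back to the standard form, which is nondegenerate, so
this map is injective, hence by counting dimensions a linear symplectomorphism; the images of the
standard basis vectors form the Darboux basis.
-/

open Module Submodule

lemma eq_zero_of_forall_sum_mul_sub_mul_eq_zero {ι R : Type*} [Fintype ι] [DecidableEq ι]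
    [CommRing R] {x : (ι → R) × (ι → R)}
    (hx : ∀ y : (ι → R) × (ι → R), ∑ i, (x.1 i * y.2 i - x.2 i * y.1 i) = 0) : x = 0 := by
  ext j
  · simpa [Pi.single_apply] using hx (0, Pi.single j 1)
  · simpa [Pi.single_apply] using hx (Pi.single j 1, 0)

def darbouxMap {K V ι : Type*} [Semiring K] [AddCommMonoid V] [Module K V] [Fintype ι]
    (e f : ι → V) : (ι → K) × (ι → K) →ₗ[K] V :=
  (Fintype.linearCombination K e).coprod (Fintype.linearCombination K f)

lemma darbouxMap_apply {K V ι : Type*} [Semiring K] [AddCommMonoid V] [Module K V] [Fintype ι]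
    (e f : ι → V) (x : (ι → K) × (ι → K)) :
    darbouxMap e f x = ∑ i, x.1 i • e i + ∑ i, x.2 i • f i :=
  rfl

namespace LinearMap.BilinForm

variable {K V : Type*} [Field K] [AddCommGroup V] [Module K V]

structure IsDarbouxFamily {ι : Type*} [DecidableEq ι] (ω : LinearMap.BilinForm K V) (e f : ι → V) :
    Prop where
  apply_e_e : ∀ i j, ω (e i) (e j) = 0
  apply_f_f : ∀ i j, ω (f i) (f j) = 0
  apply_e_f : ∀ i j, ω (e i) (f j) = if i = j then 1 else 0

variable {ω : LinearMap.BilinForm K V}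

lemma exists_apply_eq_one [Nontrivial V] (hsep : ω.SeparatingLeft) : ∃ e f, ω e f = 1 := by
  obtain ⟨e, he⟩ := exists_ne (0 : V)
  obtain ⟨w, hw⟩ : ∃ w, ω e w ≠ 0 := by
    by_contra! h
    exact he (hsep e h)
  exact ⟨e, (ω e w)⁻¹ • w, by simp [hw]⟩

namespace IsAlt

variable (hω : ω.IsAlt) {e f : V} (hef : ω e f = 1)
include hω hef

lemma apply_smul_add_smul (a b : K) : ω e (a • e + b • f) = b ∧ ω f (a • e + b • f) = -a := by
  simp [hω.self_eq_zero, hef, ← hω.neg_eq e f]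

lemma linearIndependent_pair : LinearIndependent K ![e, f] := by
  refine LinearIndependent.pair_iff.2 fun a b hab ↦ ?_
  obtain ⟨hb, ha⟩ := hω.apply_smul_add_smul hef a b
  rw [hab, map_zero] at hb ha
  exact ⟨neg_eq_zero.1 ha.symm, hb.symm⟩

lemma disjoint_span_pair_orthogonal :
    Disjoint (span K {e, f}) (ω.orthogonal (span K {e, f})) := by
  refine disjoint_def.2 fun v hv hv' ↦ ?_
  obtain ⟨a, b, rfl⟩ := mem_span_pair.1 hv
  obtain ⟨hb, ha⟩ := hω.apply_smul_add_smul hef a b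
  rw [mem_orthogonal_iff] at hv'
  have hb0 := hv' e (subset_span (by simp))
  have ha0 := hv' f (subset_span (by simp))
  rw [hb] at hb0
  rw [ha, neg_eq_zero] at ha0
  simp [ha0, hb0]

variable [FiniteDimensional K V] (hsep : ω.SeparatingLeft)
include hsep

lemma finrank_orthogonal_span_pair :
    finrank K (ω.orthogonal (span K {e, f})) + 2 = finrank K V := by
  have hnd : ω.Nondegenerate := (hω.isRefl.nondegenerate_iff_separatingLeft).2 hsep
  have h2 : finrank K (span K {e, f}) = 2 := by
    have := finrank_span_eq_card (hω.linearIndependent_pair hef)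
    rwa [Matrix.range_cons_cons_empty, Fintype.card_fin] at this
  have := finrank_orthogonal hnd (span K {e, f})
  have := (span K {e, f}).finrank_le
  omega

lemma separatingLeft_restrict_orthogonal_span_pair :
    (ω.restrict (ω.orthogonal (span K {e, f}))).SeparatingLeft := by
  have hnd : ω.Nondegenerate := (hω.isRefl.nondegenerate_iff_separatingLeft).2 hsep
  have hcompl : IsCompl (ω.orthogonal (span K {e, f}))
      (ω.orthogonal (ω.orthogonal (span K {e, f}))) := by
    rw [orthogonal_orthogonal hnd hω.isRefl]
    exact ((isCompl_orthogonal_iff_disjoint hω.isRefl).2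
      (hω.disjoint_span_pair_orthogonal hef)).symm
  exact ((restrict_nondegenerate_iff_isCompl_orthogonal hω.isRefl).2 hcompl).1

end IsAlt

lemma IsDarbouxFamily.cons {n : ℕ} {e' f' : Fin n → V} (h : IsDarbouxFamily ω e' f')
    (hω : ω.IsAlt) {e f : V} (hef : ω e f = 1)
    (he' : ∀ i, e' i ∈ ω.orthogonal (span K {e, f}))
    (hf' : ∀ i, f' i ∈ ω.orthogonal (span K {e, f})) :
    IsDarbouxFamily ω (Fin.cons e e' : Fin (n + 1) → V) (Fin.cons f f') := by
  have he : ∀ i, ω e (e' i) = 0 := fun i ↦ he' i e (subset_span (by simp))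
  have hf : ∀ i, ω f (f' i) = 0 := fun i ↦ hf' i f (subset_span (by simp))
  have hef' : ∀ i, ω e (f' i) = 0 := fun i ↦ hf' i e (subset_span (by simp))
  have hfe' : ∀ i, ω f (e' i) = 0 := fun i ↦ he' i f (subset_span (by simp))
  refine ⟨?_, ?_, ?_⟩ <;> simp [Fin.forall_fin_succ, hω.self_eq_zero, hef, he, hf, hef',
    hω.eq_iff.1 (he _), hω.eq_iff.1 (hf _), hω.eq_iff.1 (hfe' _),
    h.apply_e_e, h.apply_f_f, h.apply_e_f, Fin.succ_ne_zero, (Fin.succ_ne_zero _).symm]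

lemma exists_isDarbouxFamily [FiniteDimensional K V] (n : ℕ) (hdim : finrank K V = 2 * n)
    (hω : ω.IsAlt) (hsep : ω.SeparatingLeft) :
    ∃ e f : Fin n → V, IsDarbouxFamily ω e f := by
  induction n generalizing V with
  | zero => exact ⟨Fin.elim0, Fin.elim0, ⟨nofun, nofun, nofun⟩⟩
  | succ n ih =>
    have : Nontrivial V := nontrivial_of_finrank_pos (R := K) (by omega)
    obtain ⟨e, f, hef⟩ := exists_apply_eq_one hsep
    have hW := hω.finrank_orthogonal_span_pair hef hsep
    obtain ⟨e', f', h⟩ := ih (ω := ω.restrict (ω.orthogonal (span K {e, f}))) (by omega)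
      (fun v ↦ hω v) (hω.separatingLeft_restrict_orthogonal_span_pair hef hsep)
    exact ⟨_, _, IsDarbouxFamily.cons (ω := ω) ⟨h.1, h.2, h.3⟩ hω hef (fun i ↦ (e' i).2)
      fun i ↦ (f' i).2⟩

section DarbouxMap

variable {ι : Type*} [Fintype ι] [DecidableEq ι] {e f : ι → V}

lemma IsDarbouxFamily.apply_darbouxMap (h : IsDarbouxFamily ω e f) (hω : ω.IsAlt)
    (x y : (ι → K) × (ι → K)) :
    ω (darbouxMap e f x) (darbouxMap e f y) = ∑ i, (x.1 i * y.2 i - x.2 i * y.1 i) := by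
  have hfe (i j : ι) : ω (f i) (e j) = -if j = i then 1 else 0 := by
    rw [← hω.neg_eq, h.apply_e_f]
  simp [darbouxMap_apply, h.apply_e_e, h.apply_f_f, h.apply_e_f, hfe,
    Finset.sum_add_distrib, Finset.sum_neg_distrib, mul_comm, sub_eq_add_neg]

lemma IsDarbouxFamily.injective_darbouxMap (h : IsDarbouxFamily ω e f) (hω : ω.IsAlt) :
    Function.Injective (darbouxMap (K := K) e f) := by
  refine (injective_iff_map_eq_zero _).2 fun x hx ↦ eq_zero_of_forall_sum_mul_sub_mul_eq_zero ?_
  intro y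
  rw [← h.apply_darbouxMap hω, hx, map_zero, LinearMap.zero_apply]

end DarbouxMap

end LinearMap.BilinForm

/-- Darboux basis theorem: a `2n`-dimensional symplectic vector space has a basis
`e₁,…,eₙ,f₁,…,fₙ` with `ω(eᵢ,eⱼ) = 0`, `ω(fᵢ,fⱼ) = 0`, `ω(eᵢ,fⱼ) = δᵢⱼ`; equivalently,
`(V,ω)` is linearly symplectomorphic to `ℝ²ⁿ` with the standard symplectic form. -/
theorem darboux_basis
    (n : ℕ) (V : Type*) [AddCommGroup V] [Module ℝ V] [FiniteDimensional ℝ V]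
    (hdim : Module.finrank ℝ V = 2 * n)
    (ω : V →ₗ[ℝ] V →ₗ[ℝ] ℝ)
    (halt : ∀ v : V, ω v v = 0)
    (hnd : ∀ v : V, (∀ w : V, ω v w = 0) → v = 0) :
    (∃ b : Module.Basis (Fin n ⊕ Fin n) ℝ V,
      (∀ i j : Fin n, ω (b (Sum.inl i)) (b (Sum.inl j)) = 0) ∧
      (∀ i j : Fin n, ω (b (Sum.inr i)) (b (Sum.inr j)) = 0) ∧
      (∀ i j : Fin n, ω (b (Sum.inl i)) (b (Sum.inr j)) = if i = j then 1 else 0)) ∧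
    (∃ f : ((Fin n → ℝ) × (Fin n → ℝ)) ≃ₗ[ℝ] V,
      ∀ x y : (Fin n → ℝ) × (Fin n → ℝ),
        ω (f x) (f y) = ∑ i : Fin n, (x.1 i * y.2 i - x.2 i * y.1 i)) := by
  obtain ⟨e, f, h⟩ := LinearMap.BilinForm.exists_isDarbouxFamily n hdim halt hnd
  let L := (darbouxMap (K := ℝ) e f).linearEquivOfInjective (h.injective_darbouxMap halt)
    (by simp [hdim, two_mul])
  have hL : ∀ x y, ω (L x) (L y) = ∑ i, (x.1 i * y.2 i - x.2 i * y.1 i) :=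
    h.apply_darbouxMap halt
  refine ⟨⟨((Pi.basisFun ℝ (Fin n)).prod (Pi.basisFun ℝ (Fin n))).map L, ?_, ?_, ?_⟩, L, hL⟩ <;>
    intro i j <;> simp [hL, Pi.single_apply, eq_comm]
end

section
/- (Hamiltonian formulation of the Lotka–Volterra system) Let a : Fin n × Fin n → ℝ be skew-symmetric (a_ij = −a_ji), let ε ∈ ℝⁿ, and let q ∈ ℝⁿ with qᵢ > 0 satisfy εᵢ + Σⱼ a_ij qⱼ = 0 for all i. Define on the open positive orthant (0,∞)ⁿ the function h(x) = Σᵢ (xᵢ − qᵢ log xᵢ) and the bracket {f,g}(x) = Σ_{i<j} a_ij xᵢ xⱼ (∂f/∂xᵢ · ∂g/∂xⱼ − ∂f/∂xⱼ · ∂g/∂xᵢ). Then for each i, the bracket of the coordinate function xᵢ with h recovers the Lotka–Volterra vector field: {xᵢ, h}(x) = εᵢ xᵢ + Σⱼ a_ij xᵢ xⱼ for all x in the positive orthant. -/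
/-! For skew-symmetric `a` the bracket is the full double sum
`Σᵢⱼ aᵢⱼ xᵢ xⱼ ∂ᵢf ∂ⱼg`, so bracketing with the coordinate `xᵢ` gives
`xᵢ Σⱼ aᵢⱼ xⱼ ∂ⱼh = xᵢ Σⱼ aᵢⱼ (xⱼ − qⱼ)`, and the equilibrium condition turns
`−xᵢ Σⱼ aᵢⱼ qⱼ` into `εᵢ xᵢ`. -/

/-- The Lotka–Volterra bracket
`{f,g}(x) = Σ_{i<j} a_ij xᵢ xⱼ (∂f/∂xᵢ ∂g/∂xⱼ − ∂f/∂xⱼ ∂g/∂xᵢ)` on the positive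
orthant of `ℝⁿ`. -/
noncomputable def lvBracket (n : ℕ) (a : Fin n → Fin n → ℝ)
    (f g : (Fin n → ℝ) → ℝ) (x : Fin n → ℝ) : ℝ :=
  ∑ i : Fin n, ∑ j ∈ Finset.Ioi i,
    a i j * x i * x j *
      (fderiv ℝ f x (Pi.single i 1) * fderiv ℝ g x (Pi.single j 1)
        - fderiv ℝ f x (Pi.single j 1) * fderiv ℝ g x (Pi.single i 1))

open Finset in
theorem lvBracket_eq_sum_sum {n : ℕ} {a : Fin n → Fin n → ℝ} (hskew : ∀ i j, a i j = -a j i)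
    (f g : (Fin n → ℝ) → ℝ) (x : Fin n → ℝ) :
    lvBracket n a f g x = ∑ i, ∑ j, a i j * x i * x j *
      (fderiv ℝ f x (Pi.single i 1) * fderiv ℝ g x (Pi.single j 1)) := by
  set T : Fin n → Fin n → ℝ := fun j i => a i j * x i * x j *
    (fderiv ℝ f x (Pi.single i 1) * fderiv ℝ g x (Pi.single j 1))
  have hdiag : ∀ i, T i i = 0 := fun i => by
    simp [T, show a i i = 0 by linarith [hskew i i]]
  calc lvBracket n a f g x = ∑ i, ∑ j ∈ Ioi i, (T j i + T i j) := by
        unfold lvBracket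
        refine sum_congr rfl fun i _ => sum_congr rfl fun j _ => ?_
        simp only [T]
        rw [hskew j i]
        ring
    _ = ∑ i, ∑ j ∈ {i}ᶜ, T j i := sum_sum_Ioi_add_eq_sum_sum_off_diag T
    _ = ∑ i, ∑ j, T j i := sum_congr rfl fun i _ =>
        sum_subset (subset_univ _) fun j _ hj => by rw [show j = i by simpa using hj, hdiag]

theorem lvBracket_coord_left {n : ℕ} {a : Fin n → Fin n → ℝ} (hskew : ∀ i j, a i j = -a j i)
    (i : Fin n) (g : (Fin n → ℝ) → ℝ) (x : Fin n → ℝ) :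
    lvBracket n a (fun y => y i) g x =
      ∑ j, a i j * x i * x j * fderiv ℝ g x (Pi.single j 1) := by
  simp [lvBracket_eq_sum_sum hskew, (hasFDerivAt_apply i x).fderiv, Pi.single_apply]

theorem fderiv_sum_comp_apply_single {𝕜 ι : Type*} [NontriviallyNormedField 𝕜] [Fintype ι]
    [DecidableEq ι] {φ : ι → 𝕜 → 𝕜} {x : ι → 𝕜} (hφ : ∀ k, DifferentiableAt 𝕜 (φ k) (x k))
    (j : ι) : fderiv 𝕜 (fun y => ∑ k, φ k (y k)) x (Pi.single j 1) = deriv (φ j) (x j) := by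
  have hsum : HasFDerivAt (fun y => ∑ k, φ k (y k))
      (∑ k, deriv (φ k) (x k) • ContinuousLinearMap.proj k) x :=
    HasFDerivAt.fun_sum fun k _ =>
      (hφ k).hasDerivAt.comp_hasFDerivAt x (hasFDerivAt_apply (𝕜 := 𝕜) k x)
  simp [hsum.fderiv, Pi.single_apply]

theorem lotka_volterra_hamiltonian_general
    (n : ℕ) (a : Fin n → Fin n → ℝ) (ε : Fin n → ℝ) (q : Fin n → ℝ)
    (hskew : ∀ i j, a i j = -a j i)
    (heq : ∀ i, ε i + ∑ j : Fin n, a i j * q j = 0) :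
    ∀ (i : Fin n) (x : Fin n → ℝ), (∀ k, 0 < x k) →
      lvBracket n a (fun y => y i)
          (fun y => ∑ k : Fin n, (y k - q k * Real.log (y k))) x
        = ε i * x i + ∑ j : Fin n, a i j * x i * x j := by
  intro i x hx
  have hderiv : ∀ k, HasDerivAt (fun t => t - q k * Real.log t) (1 - q k * (x k)⁻¹) (x k) :=
    fun k => (hasDerivAt_id (x k)).sub ((Real.hasDerivAt_log (hx k).ne').const_mul (q k))
  have hpartial : ∀ j, fderiv ℝ (fun y => ∑ k : Fin n, (y k - q k * Real.log (y k))) x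
      (Pi.single j 1) = 1 - q j * (x j)⁻¹ := fun j =>
    (fderiv_sum_comp_apply_single (fun k => (hderiv k).differentiableAt) j).trans (hderiv j).deriv
  calc _ = ∑ j, a i j * x i * x j * (1 - q j * (x j)⁻¹) := by
        simp only [lvBracket_coord_left hskew, hpartial]
    _ = ∑ j, a i j * x i * x j - x i * ∑ j, a i j * q j := by
        rw [Finset.mul_sum, ← Finset.sum_sub_distrib]
        refine Finset.sum_congr rfl fun j _ => ?_
        field_simp [(hx j).ne']
    _ = ε i * x i + ∑ j, a i j * x i * x j := by
        rw [eq_neg_of_add_eq_zero_right (heq i)]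
        ring

/-- Hamiltonian formulation of the Lotka–Volterra system: with a skew-symmetric
interaction matrix `a` and a positive equilibrium `q`, the bracket of the coordinate
function `xᵢ` with `h(x) = Σᵢ (xᵢ − qᵢ log xᵢ)` recovers the Lotka–Volterra vector
field on the positive orthant. -/
theorem lotka_volterra_hamiltonian
    (n : ℕ) (a : Fin n → Fin n → ℝ) (ε : Fin n → ℝ) (q : Fin n → ℝ)
    (hskew : ∀ i j, a i j = -a j i)
    (hqpos : ∀ i, 0 < q i)
    (heq : ∀ i, ε i + ∑ j : Fin n, a i j * q j = 0) :
    ∀ (i : Fin n) (x : Fin n → ℝ), (∀ k, 0 < x k) →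
      lvBracket n a (fun y => y i)
          (fun y => ∑ k : Fin n, (y k - q k * Real.log (y k))) x
        = ε i * x i + ∑ j : Fin n, a i j * x i * x j :=
  lotka_volterra_hamiltonian_general n a ε q hskew heq
end
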